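/- arXiv:1404.0671 — 7 statements merged into one kernel-verified Lean document; each statement's English description precedes it below -/
import Mathlib

section
/- The adjugate of the characteristic matrix λI - B̂ equals λ^{n-1} I + λ^{n-2} (B̂ - (∑_{i=1}^n b_i) I), as a polynomial identity in λ. -/
/-!
`B̂` is the rank-one matrix `b ⊗ 𝟙`, so `B̂² = s B̂` with `s = ∑ bᵢ`, and its characteristic
polynomial is `λⁿ - s λⁿ⁻¹`. The first fact gives `(λ I + B̂ - s I)(λ I - B̂) = λ (λ - s) I`, so the
claimed matrix times `λ I - B̂` is `det (λ I - B̂) • I`; since that determinant is monic, hence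
regular, this characterises the adjugate.
-/

open Matrix Polynomial

namespace Matrix

variable {n R : Type*} [Fintype n] [CommRing R]

theorem vecMulVec_mul_self (u v : n → R) :
    vecMulVec u v * vecMulVec u v = (v ⬝ᵥ u) • vecMulVec u v := by
  rw [vecMulVec_mul_vecMulVec, vecMulVec_smul]

variable [DecidableEq n]

theorem eq_adjugate_of_mul_eq_det_smul_one {A B : Matrix n n R} (hA : IsLeftRegular A.det)
    (h : B * A = A.det • 1) : B = A.adjugate := by
  have : A.det • B = A.det • A.adjugate := calc
    A.det • B = B * (A * A.adjugate) := by rw [mul_adjugate, Matrix.mul_smul, Matrix.mul_one]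
    _ = A.det • A.adjugate := by rw [← Matrix.mul_assoc, h, Matrix.smul_mul, Matrix.one_mul]
  ext i j
  exact hA (congrFun (congrFun this i) j)

theorem charmatrix_eq_smul_one_sub_map (M : Matrix n n R) :
    charmatrix M = (X : R[X]) • (1 : Matrix n n R[X]) - M.map C := by
  rw [charmatrix, smul_one_eq_diagonal]; rfl

theorem mul_charmatrix_of_mul_self_eq_smul {N : Matrix n n R} {s : R} (hN : N * N = s • N) :
    ((X : R[X]) • (1 : Matrix n n R[X]) + N.map C - C s • 1) * charmatrix N =
      (X * (X - C s)) • 1 := by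
  have hN' : N.map C * N.map C = C s • N.map C := by
    rw [← Matrix.map_mul, hN]; ext; simp
  rw [charmatrix_eq_smul_one_sub_map]
  simp only [add_mul, sub_mul, Matrix.mul_sub, Matrix.smul_mul, Matrix.mul_smul, Matrix.one_mul,
    Matrix.mul_one, hN']
  module

theorem adjugate_charmatrix_vecMulVec (u v : n → R) (hn : 2 ≤ Fintype.card n) :
    (charmatrix (vecMulVec u v)).adjugate =
      (X : R[X]) ^ (Fintype.card n - 1) • (1 : Matrix n n R[X]) +
        (X : R[X]) ^ (Fintype.card n - 2) • ((vecMulVec u v).map C - C (u ⬝ᵥ v) • 1) := by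
  obtain ⟨k, hk⟩ : ∃ k, Fintype.card n = k + 2 := ⟨_, (Nat.sub_add_cancel hn).symm⟩
  have hdet : (charmatrix (vecMulVec u v)).det = X ^ k * (X * (X - C (u ⬝ᵥ v))) := by
    rw [← charpoly, charpoly_vecMulVec, hk, smul_eq_C_mul, show k + 2 - 1 = k + 1 from rfl]; ring
  refine (eq_adjugate_of_mul_eq_det_smul_one ?_ ?_).symm
  · rw [← charpoly]; exact (charpoly_monic _).isRegular.left
  · have hN := vecMulVec_mul_self u v
    rw [dotProduct_comm] at hN
    rw [hdet, hk, ← smul_smul, ← mul_charmatrix_of_mul_self_eq_smul hN, ← Matrix.smul_mul]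
    congr 1
    rw [Nat.add_sub_cancel, show k + 2 - 1 = k + 1 from rfl, pow_succ]
    module

end Matrix

theorem stmt7 {K : Type*} [Field K] (n : ℕ) (hn : 2 ≤ n) (b : Fin n → K) :
    (Matrix.charmatrix (Matrix.of fun i _ : Fin n => b i)).adjugate =
      (X : K[X]) ^ (n - 1) • (1 : Matrix (Fin n) (Fin n) K[X]) +
        (X : K[X]) ^ (n - 2) •
          ((Matrix.of fun i _ : Fin n => b i).map C -
            C (∑ i, b i) • (1 : Matrix (Fin n) (Fin n) K[X])) := by
  have hB : (Matrix.of fun i _ : Fin n => b i) = vecMulVec b 1 := by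
    ext; simp [vecMulVec_apply]
  have hsum : ∑ i, b i = b ⬝ᵥ 1 := by simp [dotProduct]
  simpa only [hB, hsum, Fintype.card_fin] using
    adjugate_charmatrix_vecMulVec b 1 (by simpa using hn)
end

section
/- If ∑_{i=1}^n b_i ≠ 0, the explicit inverse of the modal matrix S is given by S^{-1} = -(1/∑ b_i) M, where M has rows: row k (1 ≤ k ≤ n-1) equals (b_{k+1}, ..., b_{k+1}) except entry in column k+1 which is -∑_{i≠k+1} b_i; and row n has all entries -1. -/
/-!
Index by `Fin (m + 1)`, write `s = ∑ i, b i` and `eᵢ` for the unit vectors. The columns of `S`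
are `e_{k+1} - e₀` (for `k < m`) and `b`; the rows of `M` are `b_{k+1} 𝟙 - s e_{k+1}` and `-𝟙`.
Hence `S * M = ∑ₖ (e_{k+1} - e₀)(b_{k+1} 𝟙 - s e_{k+1})ᵀ - b 𝟙ᵀ`, and the `b`-terms and the
`e₀`-terms telescope away, leaving `-s • 1`.
-/

open Matrix

section Modal

variable {R : Type*} [CommRing R] {m : ℕ}

def modalMatrix (b : Fin (m + 1) → R) : Matrix (Fin (m + 1)) (Fin (m + 1)) R :=
  of fun i j =>
    Fin.lastCases (b i) (fun k => (if i = k.succ then 1 else 0) - if i = 0 then 1 else 0) j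

def scaledModalInverse (b : Fin (m + 1) → R) : Matrix (Fin (m + 1)) (Fin (m + 1)) R :=
  of fun k j => Fin.lastCases (-1) (fun k => b k.succ - if j = k.succ then ∑ i, b i else 0) k

theorem sum_ite_eq_succ (j : Fin (m + 1)) (s : R) :
    ∑ k : Fin m, (if j = k.succ then s else 0) = if j = 0 then 0 else s := by
  induction j using Fin.cases with
  | zero => simp [(Fin.succ_ne_zero _).symm]
  | succ j => simp [Fin.succ_inj, Fin.succ_ne_zero]

theorem modalMatrix_mul_scaledModalInverse (b : Fin (m + 1) → R) :
    modalMatrix b * scaledModalInverse b = -(∑ i, b i) • 1 := by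
  ext i j
  rw [mul_apply, Fin.sum_univ_castSucc]
  simp only [modalMatrix, scaledModalInverse, of_apply, Fin.lastCases_castSucc,
    Fin.lastCases_last]
  induction i using Fin.cases with
  | zero =>
    by_cases hj : j = 0 <;> simp [(Fin.succ_ne_zero _).symm, sum_ite_eq_succ, Fin.sum_univ_succ,
      one_apply, hj, eq_comm (a := (0 : Fin (m + 1)))]
  | succ i =>
    rcases eq_or_ne j i.succ with rfl | hj
    · simp [Fin.succ_inj, one_apply, ← sub_eq_add_neg, sub_sub_cancel_left]
    · simp [Fin.succ_inj, one_apply, hj, hj.symm]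

theorem modalMatrix_eq_of_val (b : Fin (m + 1) → R) :
    modalMatrix b = of fun i j : Fin (m + 1) =>
      if (j : ℕ) = m + 1 - 1 then b i
      else if (i : ℕ) = 0 then (-1 : R)
      else if (i : ℕ) = (j : ℕ) + 1 then 1 else 0 := by
  ext i j
  induction j using Fin.lastCases with
  | last => simp [modalMatrix]
  | cast k =>
    induction i using Fin.cases with
    | zero => simp [modalMatrix, (Fin.succ_ne_zero _).symm, k.isLt.ne]
    | succ i =>
      simp only [modalMatrix, of_apply, Fin.lastCases_castSucc]
      simp [Fin.ext_iff, k.isLt.ne]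

theorem scaledModalInverse_eq_of_val (b : Fin (m + 1) → R) :
    scaledModalInverse b = of fun k j : Fin (m + 1) =>
      if (k : ℕ) = m + 1 - 1 then (-1 : R)
      else if (j : ℕ) = (k : ℕ) + 1 then
        -((∑ i, b i) - b ⟨min ((k : ℕ) + 1) (m + 1 - 1), by omega⟩)
      else b ⟨min ((k : ℕ) + 1) (m + 1 - 1), by omega⟩ := by
  ext k j
  induction k using Fin.lastCases with
  | last => simp [scaledModalInverse]
  | cast k =>
    have hk : (⟨min ((k : ℕ) + 1) (m + 1 - 1), by omega⟩ : Fin (m + 1)) = k.succ :=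
      Fin.ext (min_eq_left k.isLt)
    simp only [scaledModalInverse, of_apply, Fin.lastCases_castSucc, Fin.val_castSucc, hk]
    simp only [Nat.add_sub_cancel, k.isLt.ne, if_false, Fin.ext_iff, Fin.val_succ]
    split_ifs <;> ring

end Modal

theorem stmt11 {K : Type*} [Field K] (n : ℕ) (b : Fin n → K)
    (hs : ∑ i, b i ≠ 0)
    (S M : Matrix (Fin n) (Fin n) K)
    (hS : S = Matrix.of fun i j : Fin n =>
        if (j : ℕ) = n - 1 then b i
        else if (i : ℕ) = 0 then (-1 : K)
        else if (i : ℕ) = (j : ℕ) + 1 then 1 else 0)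
    (hM : M = Matrix.of fun k j : Fin n =>
        if (k : ℕ) = n - 1 then (-1 : K)
        else if (j : ℕ) = (k : ℕ) + 1 then
          -((∑ i, b i) - b ⟨min ((k : ℕ) + 1) (n - 1), by omega⟩)
        else b ⟨min ((k : ℕ) + 1) (n - 1), by omega⟩) :
    S * (-(∑ i, b i)⁻¹ • M) = 1 := by
  cases n with
  | zero => exact Subsingleton.elim _ _
  | succ m =>
    rw [hS, hM, ← modalMatrix_eq_of_val, ← scaledModalInverse_eq_of_val, Matrix.mul_smul,
      modalMatrix_mul_scaledModalInverse, smul_smul, neg_mul_neg, inv_mul_cancel₀ hs, one_smul]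
end

section
/- If ∑_{i=1}^n b_i = 0 and b_n ≠ 0, then the matrix B̂ is similar to the matrix with a single 2×2 nilpotent Jordan block: with T the matrix whose columns are v_1, ..., v_{n-2} (kernel vectors), (b_1, ..., b_n)^T, and e_1, we have T^{-1} B̂ T equal to the matrix that is zero except for a 1 in position (n-1, n). -/
/-!
Write `𝟙` for the all-ones vector, so that `B̂ = b 𝟙ᵀ`. The columns of `T` all sum to `0`, except
the last one, `e₁`, so `B̂ T = b (𝟙ᵀ T) = b eₙᵀ`; since the column `n - 1` of `T` is `b`, this is
`T J` for the nilpotent Jordan block `J = E_{n-1,n}`. The matrix `T` is invertible: a row vector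
`x` with `x T = 0` pairs to zero with `e₁` and with every `e_{k+1} - e₁`, so it is supported on
the last coordinate, and pairing with `b` then gives `xₙ bₙ = 0`.
-/

open Matrix

theorem Matrix.replicateCol_mul_eq_mul_single {m α : Type*} [Fintype m] [DecidableEq m]
    [CommSemiring α] {b : m → α} {M : Matrix m m α} {i j : m}
    (hcol : M.col i = b) (hsum : 1 ᵥ* M = Pi.single j 1) :
    replicateCol m b * M = M * single i j 1 := by
  rw [← vecMulVec_one, vecMulVec_mul, hsum, single_eq_single_vecMulVec_single, mul_vecMulVec,
    mulVec_single_one, hcol]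

section jordanBasis

variable {R : Type*} [CommRing R] {m : ℕ}

/-- The matrix `T` for `n = m + 2`, indexed from `0`: column `j < m` is `e_{j+1} - e_0`,
column `m` is `b` and column `m + 1` is `e_0`. -/
def jordanBasis (b : Fin (m + 2) → R) : Matrix (Fin (m + 2)) (Fin (m + 2)) R :=
  of fun i j =>
    if (j : ℕ) = m + 1 then (if (i : ℕ) = 0 then 1 else 0)
    else if (j : ℕ) = m then b i
    else if (i : ℕ) = 0 then -1
    else if (i : ℕ) = j + 1 then 1 else 0

theorem col_jordanBasis_castSucc_castSucc (b : Fin (m + 2) → R) (k : Fin m) :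
    (jordanBasis b).col k.castSucc.castSucc = Pi.single k.succ.castSucc 1 - Pi.single 0 1 := by
  ext i
  simp only [col_apply, jordanBasis, of_apply, Pi.sub_apply, Pi.single_apply, Fin.ext_iff,
    Fin.val_castSucc, Fin.val_succ, Fin.val_zero]
  split_ifs <;> first | omega | simp

theorem col_jordanBasis_castSucc_last (b : Fin (m + 2) → R) :
    (jordanBasis b).col (Fin.last m).castSucc = b := by
  ext i; simp [jordanBasis]

theorem col_jordanBasis_last (b : Fin (m + 2) → R) :
    (jordanBasis b).col (Fin.last (m + 1)) = Pi.single 0 1 := by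
  ext i
  simp only [col_apply, jordanBasis, of_apply, Pi.single_apply, Fin.ext_iff, Fin.val_last,
    Fin.val_zero, if_true]

theorem one_vecMul_jordanBasis {b : Fin (m + 2) → R} (hs : ∑ i, b i = 0) :
    1 ᵥ* jordanBasis b = Pi.single (Fin.last (m + 1)) 1 := by
  ext j
  change 1 ⬝ᵥ (jordanBasis b).col j = _
  induction j using Fin.lastCases with
  | last => simp [col_jordanBasis_last]
  | cast j =>
    induction j using Fin.lastCases with
    | last => simp [col_jordanBasis_castSucc_last, one_dotProduct, hs]
    | cast k => simp [col_jordanBasis_castSucc_castSucc]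

theorem det_jordanBasis_ne_zero [IsDomain R] {b : Fin (m + 2) → R}
    (hb : b (Fin.last (m + 1)) ≠ 0) : (jordanBasis b).det ≠ 0 := by
  rw [Ne, ← exists_vecMul_eq_zero_iff]
  rintro ⟨x, hx_ne, hx⟩
  have hcol (j : Fin (m + 2)) : x ⬝ᵥ (jordanBasis b).col j = 0 := congrFun hx j
  have h0 : x 0 = 0 := by simpa [col_jordanBasis_last] using hcol (Fin.last _)
  have hcast (i : Fin (m + 1)) : x i.castSucc = 0 := by
    induction i using Fin.cases with
    | zero => exact h0
    | succ k =>
      simpa [col_jordanBasis_castSucc_castSucc, h0] using hcol k.castSucc.castSucc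
  have hlast : x (Fin.last (m + 1)) = 0 := by
    have := hcol (Fin.last m).castSucc
    rw [col_jordanBasis_castSucc_last] at this
    simpa [dotProduct, Fin.sum_univ_castSucc, hcast, hb] using this
  refine hx_ne (funext fun i => ?_)
  induction i using Fin.lastCases with
  | last => exact hlast
  | cast i => exact hcast i

theorem replicateCol_mul_jordanBasis {b : Fin (m + 2) → R} (hs : ∑ i, b i = 0) :
    replicateCol _ b * jordanBasis b =
      jordanBasis b * single (Fin.last m).castSucc (Fin.last (m + 1)) 1 :=
  replicateCol_mul_eq_mul_single (col_jordanBasis_castSucc_last b) (one_vecMul_jordanBasis hs)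

end jordanBasis

theorem stmt12 {K : Type*} [Field K] (n : ℕ) (hn : 2 ≤ n) (b : Fin n → K)
    (hs : ∑ i, b i = 0) (hb : b ⟨n - 1, by omega⟩ ≠ 0)
    (T : Matrix (Fin n) (Fin n) K)
    (hT : T = Matrix.of fun i j : Fin n =>
        if (j : ℕ) = n - 1 then (if (i : ℕ) = 0 then 1 else 0)
        else if (j : ℕ) = n - 2 then b i
        else if (i : ℕ) = 0 then (-1 : K)
        else if (i : ℕ) = (j : ℕ) + 1 then 1 else 0) :
    IsUnit T.det ∧
      T⁻¹ * (Matrix.of fun i _ : Fin n => b i) * T =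
        Matrix.of (fun i j : Fin n =>
          if (i : ℕ) = n - 2 ∧ (j : ℕ) = n - 1 then (1 : K) else 0) := by
  obtain ⟨m, rfl⟩ : ∃ m, n = m + 2 := ⟨n - 2, by omega⟩
  obtain rfl : T = jordanBasis b := hT
  have hdet : IsUnit (jordanBasis b).det := isUnit_iff_ne_zero.mpr (det_jordanBasis_ne_zero hb)
  have hJ : (of fun i j : Fin (m + 2) => if (i : ℕ) = m + 2 - 2 ∧ (j : ℕ) = m + 2 - 1 then (1 : K)
      else 0) = single (Fin.last m).castSucc (Fin.last (m + 1)) 1 := by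
    ext i j
    simp [single, Fin.ext_iff, eq_comm]
  refine ⟨hdet, ?_⟩
  rw [hJ, ← replicateCol, mul_assoc, replicateCol_mul_jordanBasis hs, ← mul_assoc,
    nonsing_inv_mul _ hdet, one_mul]
end

section
/- Let A be a linear operator on a vector space V over K, B ∈ K^{n×n}, and x_1,...,x_n, φ_1,...,φ_n ∈ V satisfying A(x_i) = ∑_j B_{ij} x_j + φ_i for all i. If B_0, ..., B_{n-1} are the coefficients of adj(λI - B) (so adj(λI - B) = ∑_{k=1}^n B_{k-1} λ^{n-k}), then Δ_B(A)(x⃗) = ∑_{k=1}^n B_{k-1} A^{n-k}(φ⃗), where Δ_B is the characteristic polynomial of B applied to A componentwise. -/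
/-! Let a polynomial matrix `P` act on `V^n` by `(P x)_i = ∑ⱼ P_ij(A) x_j`; this action is
multiplicative. The system says exactly that `(λI - B)` sends `x` to `φ`, so applying
`adj(λI - B)` and using `adj(λI - B) (λI - B) = Δ_B(λ) I` gives `Δ_B(A) x = adj(λI - B) φ`,
whose right-hand side expands to `∑ₖ Bₖ₋₁ A^{n-k} φ`. -/

open Matrix Polynomial

namespace Matrix

variable {R V ι : Type*} [CommRing R] [AddCommGroup V] [Module R V] [Fintype ι]

noncomputable def aevalMulVec (A : V →ₗ[R] V) (P : Matrix ι ι R[X]) (w : ι → V) : ι → V :=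
  fun i => ∑ j, aeval A (P i j) (w j)

variable (A : V →ₗ[R] V)

theorem aevalMulVec_mul (P Q : Matrix ι ι R[X]) (w : ι → V) :
    aevalMulVec A (P * Q) w = aevalMulVec A P (aevalMulVec A Q w) := by
  funext i
  simp only [aevalMulVec, mul_apply, map_sum, LinearMap.coe_sum, Finset.sum_apply,
    _root_.map_mul, Module.End.mul_apply]
  exact Finset.sum_comm

theorem aevalMulVec_smul_one [DecidableEq ι] (p : R[X]) (w : ι → V) (i : ι) :
    aevalMulVec A (p • (1 : Matrix ι ι R[X])) w i = aeval A p (w i) := by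
  simp only [aevalMulVec, smul_apply, one_apply, smul_eq_mul, mul_ite, mul_one, mul_zero]
  rw [Finset.sum_eq_single i (fun j _ hj => by simp [Ne.symm hj]) (by simp)]
  simp

theorem aevalMulVec_charmatrix [DecidableEq ι] (B : Matrix ι ι R) (x φ : ι → V)
    (hsys : ∀ i, A (x i) = ∑ j, B i j • x j + φ i) :
    aevalMulVec A (charmatrix B) x = φ := by
  funext i
  have hterm : ∀ j, aeval A (charmatrix B i j) (x j) =
      (if i = j then A (x j) else 0) - B i j • x j := by
    intro j
    by_cases h : i = j <;> simp [h, Module.algebraMap_end_apply]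
  simp only [aevalMulVec, hterm, Finset.sum_sub_distrib, Finset.sum_ite_eq, Finset.mem_univ,
    if_true, hsys i, add_sub_cancel_left]

theorem aevalMulVec_sum_X_pow_smul_map_C {κ : Type*} [Fintype κ] (d : κ → ℕ)
    (M : κ → Matrix ι ι R) (w : ι → V) (i : ι) :
    aevalMulVec A (∑ k, (X : R[X]) ^ d k • (M k).map C) w i =
      ∑ k, ∑ j, M k i j • (A ^ d k) (w j) := by
  simp only [aevalMulVec, sum_apply, smul_apply, map_apply, smul_eq_mul, map_sum,
    LinearMap.coe_sum, Finset.sum_apply, _root_.map_mul, aeval_X_pow, aeval_C,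
    Module.End.mul_apply, Module.algebraMap_end_apply, LinearMap.map_smul]
  exact Finset.sum_comm

/-- Cayley–Hamilton for an inhomogeneous system `A x = B x + φ`. -/
theorem aeval_charpoly_eq_aevalMulVec_adjugate [DecidableEq ι] (B : Matrix ι ι R)
    (x φ : ι → V) (hsys : ∀ i, A (x i) = ∑ j, B i j • x j + φ i) (i : ι) :
    aeval A B.charpoly (x i) = aevalMulVec A (charmatrix B).adjugate φ i := by
  rw [← aevalMulVec_smul_one, charpoly, ← adjugate_mul, aevalMulVec_mul,
    aevalMulVec_charmatrix A B x φ hsys]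

end Matrix

theorem stmt14_general {K : Type*} [Field K] {V : Type*} [AddCommGroup V] [Module K V]
    (A : V →ₗ[K] V) (n : ℕ)
    (B : Matrix (Fin n) (Fin n) K) (x φ : Fin n → V)
    (hsys : ∀ i, A (x i) = ∑ j, B i j • x j + φ i)
    (Bk : Fin n → Matrix (Fin n) (Fin n) K)
    (hB : (Matrix.charmatrix B).adjugate =
        ∑ k : Fin n, (X : K[X]) ^ (n - 1 - (k : ℕ)) • (Bk k).map C) :
    ∀ i, (Polynomial.aeval A B.charpoly) (x i) =
      ∑ k : Fin n, ∑ j, Bk k i j • ((A ^ (n - 1 - (k : ℕ))) (φ j)) := by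
  intro i
  rw [aeval_charpoly_eq_aevalMulVec_adjugate A B x φ hsys, hB,
    aevalMulVec_sum_X_pow_smul_map_C]

theorem stmt14 {K : Type*} [Field K] {V : Type*} [AddCommGroup V] [Module K V]
    (A : V →ₗ[K] V) (n : ℕ) (hn : 1 ≤ n)
    (B : Matrix (Fin n) (Fin n) K) (x φ : Fin n → V)
    (hsys : ∀ i, A (x i) = ∑ j, B i j • x j + φ i)
    (Bk : Fin n → Matrix (Fin n) (Fin n) K)
    (hB : (Matrix.charmatrix B).adjugate =
        ∑ k : Fin n, (X : K[X]) ^ (n - 1 - (k : ℕ)) • (Bk k).map C) :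
    ∀ i, (Polynomial.aeval A B.charpoly) (x i) =
      ∑ k : Fin n, ∑ j, Bk k i j • ((A ^ (n - 1 - (k : ℕ))) (φ j)) :=
  stmt14_general A n B x φ hsys Bk hB
end

section
/- Let A be a linear operator on V and suppose A(x_i) = b_i(x_1 + ... + x_n) + φ_i for all 1 ≤ i ≤ n, where b_i ∈ K and φ_i ∈ V. Then for each j, with s = ∑_i b_i: A^n(x_j) - s·A^{n-1}(x_j) = A^{n-1}(φ_j) + ∑_{i≠j} (b_j A^{n-2}(φ_i) - b_i A^{n-2}(φ_j)). -/
open Finset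

section LinearSystem

variable {R ι V : Type*} [CommRing R] [AddCommGroup V] [Module R V] [Fintype ι]
  (A : V →ₗ[R] V) {b : ι → R} {x φ : ι → V}

theorem apply_sum_of_apply_eq_smul_sum_add (hsys : ∀ i, A (x i) = b i • ∑ j, x j + φ i) :
    A (∑ j, x j) = (∑ i, b i) • ∑ j, x j + ∑ i, φ i := by
  simp only [map_sum, hsys, sum_add_distrib, sum_smul]

/-- Applying `A` once more eliminates the unknown `∑ j, x j` between `A (x j)` and
`A (∑ j, x j)`; the theorem is the image of this identity under `A ^ (n - 2)`. -/
theorem apply_apply_sub_smul_of_apply_eq_smul_sum_add [DecidableEq ι]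
    (hsys : ∀ i, A (x i) = b i • ∑ j, x j + φ i) (j : ι) :
    A (A (x j) - (∑ i, b i) • x j) =
      A (φ j) + ∑ i ∈ univ.erase j, (b j • φ i - b i • φ j) := by
  rw [map_sub, map_smul, hsys j, map_add, map_smul, apply_sum_of_apply_eq_smul_sum_add A hsys,
    sum_sub_distrib, ← smul_sum, ← sum_smul, sum_erase_eq_sub (mem_univ j),
    sum_erase_eq_sub (mem_univ j)]
  module

end LinearSystem

theorem Module.End.pow_add_two_apply_sub_smul {R V : Type*} [CommRing R] [AddCommGroup V]
    [Module R V] (A : Module.End R V) (m : ℕ) (c : R) (v : V) :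
    (A ^ (m + 2)) v - c • (A ^ (m + 1)) v = (A ^ m) (A (A v - c • v)) := by
  simp only [pow_succ, Module.End.mul_apply, map_sub, map_smul]

theorem stmt15 {K : Type*} [Field K] {V : Type*} [AddCommGroup V] [Module K V]
    (A : V →ₗ[K] V) (n : ℕ) (hn : 2 ≤ n) (b : Fin n → K) (x φ : Fin n → V)
    (hsys : ∀ i, A (x i) = b i • (∑ j, x j) + φ i) :
    ∀ j, (A ^ n) (x j) - (∑ i, b i) • (A ^ (n - 1)) (x j) =
      (A ^ (n - 1)) (φ j) +
        ∑ i ∈ Finset.univ.erase j,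
          (b j • (A ^ (n - 2)) (φ i) - b i • (A ^ (n - 2)) (φ j)) := by
  obtain ⟨m, rfl⟩ : ∃ m, n = m + 2 := ⟨n - 2, by omega⟩
  intro j
  rw [Nat.add_sub_cancel, show m + 2 - 1 = m + 1 by omega, Module.End.pow_add_two_apply_sub_smul,
    apply_apply_sub_smul_of_apply_eq_smul_sum_add A hsys, map_add, map_sum, pow_succ,
    Module.End.mul_apply]
  simp only [map_sub, map_smul]
end

section
/- Let A be a linear operator on V and suppose A(x_i) = ∑_{j=1}^n b_j x_j + φ_i for all 1 ≤ i ≤ n (every equation has the same linear combination on the right). Then for each j, with s = ∑_i b_i: A^n(x_j) - s·A^{n-1}(x_j) = A^{n-1}(φ_j) + ∑_{i≠j} b_i (A^{n-2}(φ_i) - A^{n-2}(φ_j)). -/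
/-!
Since all equations share the right-hand side up to the `φ i`, the operator maps differences to
differences: `A (x i - x j) = φ i - φ j`. Writing `A x_j - s x_j = φ_j + ∑_{i ≠ j} b_i (x_i - x_j)`
and applying `A^(n-1)`, each difference absorbs one factor `A`, leaving `A^(n-2) (φ_i - φ_j)`.
-/

open Finset

section RepeatedCombination

variable {R M : Type*} [Ring R] [AddCommGroup M] [Module R M]

theorem pow_succ_apply_sub_smul_pow_apply (A : Module.End R M) (k : ℕ) (c : R) (v : M) :
    (A ^ (k + 1)) v - c • (A ^ k) v = (A ^ k) (A v - c • v) := by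
  rw [pow_succ, Module.End.mul_apply, map_sub, map_smul]

variable {ι : Type*} [Fintype ι] {A : Module.End R M} {b : ι → R} {x φ : ι → M}

theorem apply_sub_eq_sub_of_apply_eq_sum_add (hsys : ∀ i, A (x i) = (∑ j, b j • x j) + φ i)
    (i j : ι) : A (x i - x j) = φ i - φ j := by
  rw [map_sub, hsys i, hsys j]
  abel

theorem apply_sub_sum_smul_eq_of_apply_eq_sum_add [DecidableEq ι]
    (hsys : ∀ i, A (x i) = (∑ j, b j • x j) + φ i) (j : ι) :
    A (x j) - (∑ i, b i) • x j = φ j + ∑ i ∈ univ.erase j, b i • (x i - x j) := by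
  have hsum : ∑ i ∈ univ.erase j, b i • (x i - x j) = ∑ i, b i • (x i - x j) :=
    sum_erase _ (by simp)
  rw [hsum, hsys j]
  simp only [smul_sub, sum_sub_distrib, ← sum_smul]
  abel

end RepeatedCombination

theorem stmt16 {K : Type*} [Field K] {V : Type*} [AddCommGroup V] [Module K V]
    (A : V →ₗ[K] V) (n : ℕ) (hn : 2 ≤ n) (b : Fin n → K) (x φ : Fin n → V)
    (hsys : ∀ i, A (x i) = (∑ j, b j • x j) + φ i) :
    ∀ j, (A ^ n) (x j) - (∑ i, b i) • (A ^ (n - 1)) (x j) =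
      (A ^ (n - 1)) (φ j) +
        ∑ i ∈ Finset.univ.erase j,
          b i • ((A ^ (n - 2)) (φ i) - (A ^ (n - 2)) (φ j)) := by
  intro j
  obtain ⟨m, rfl⟩ : ∃ m, n = m + 2 := ⟨n - 2, by omega⟩
  have hdiff (i : Fin (m + 2)) : (A ^ (m + 1)) (x i - x j) = (A ^ m) (φ i) - (A ^ m) (φ j) := by
    rw [pow_succ, Module.End.mul_apply, apply_sub_eq_sub_of_apply_eq_sum_add hsys, map_sub]
  rw [show m + 2 - 1 = m + 1 from rfl, show m + 2 - 2 = m from rfl,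
    pow_succ_apply_sub_smul_pow_apply, apply_sub_sum_smul_eq_of_apply_eq_sum_add hsys, map_add,
    map_sum]
  simp only [map_smul, hdiff]
end

section
/- The determinant of the n×n doubly companion matrix C(α, β), built from monic polynomials α(λ) = λ^n + a_1 λ^{n-1} + ... + a_n and β(λ) = λ^n + b_1 λ^{n-1} + ... + b_n (first row -a_1, ..., -a_{n-1}, -a_n - b_n; subdiagonal of ones; last column -b_{n-1}, ..., -b_1 below the first row), equals (-1)^n (a_n + b_n + ∑_{k=1}^{n-1} a_k b_{n-k}). -/
/-!
Below the first row, every column but the last is a unit vector, so adding suitable multiples of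
these columns to the last one clears it except for its top entry, which becomes
`-(aₙ + bₙ + ∑ aₖ bₙ₋ₖ)`. Expanding along the last column then leaves an identity minor.
-/

open Matrix

namespace Matrix

variable {R : Type*} [CommRing R] {m : ℕ}

theorem det_succ_of_col_last_eq_zero (A : Matrix (Fin (m + 1)) (Fin (m + 1)) R)
    (h : ∀ i : Fin m, A i.succ (Fin.last m) = 0) :
    A.det = (-1) ^ m * A 0 (Fin.last m) * (A.submatrix Fin.succ Fin.castSucc).det := by
  rw [det_succ_column A (Fin.last m), Fin.sum_univ_succ]
  simp [h, Fin.succAbove_last]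

theorem det_succ_of_submatrix_succ_castSucc_eq_one (A : Matrix (Fin (m + 1)) (Fin (m + 1)) R)
    (h : A.submatrix Fin.succ Fin.castSucc = 1) :
    A.det = (-1) ^ m *
      (A 0 (Fin.last m) - ∑ j : Fin m, A 0 j.castSucc * A j.succ (Fin.last m)) := by
  have hA (i j : Fin m) : A i.succ j.castSucc = (1 : Matrix (Fin m) (Fin m) R) i j :=
    congrFun₂ h i j
  let c : Fin (m + 1) → R := Fin.lastCases 1 fun j => -A j.succ (Fin.last m)
  let B := A.updateCol (Fin.last m) fun k => ∑ i, c i • A k i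
  have hB : B.det = A.det := by
    simpa [B, c] using det_updateCol_sum A (Fin.last m) c
  have hcol (k : Fin (m + 1)) : B k (Fin.last m) =
      A k (Fin.last m) - ∑ j : Fin m, A k j.castSucc * A j.succ (Fin.last m) := by
    simp [B, c, Fin.sum_univ_castSucc, sub_eq_add_neg, add_comm, mul_comm]
  have hsub : B.submatrix Fin.succ Fin.castSucc = 1 := by
    refine Eq.trans ?_ h
    ext i j
    simp [B, (Fin.castSucc_lt_last j).ne]
  rw [← hB, det_succ_of_col_last_eq_zero B, hsub, det_one, mul_one, hcol]
  intro i
  simp [hcol, hA, one_apply]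

end Matrix

theorem sum_Icc_one_eq_sum_fin {M : Type*} [AddCommMonoid M] (m : ℕ) (f : ℕ → M) :
    ∑ k ∈ Finset.Icc 1 m, f k = ∑ j : Fin m, f (j + 1) := by
  rw [← Finset.Ico_add_one_right_eq_Icc, Finset.sum_Ico_eq_sum_range, Nat.add_sub_cancel,
    Fin.sum_univ_eq_sum_range (fun j => f (j + 1))]
  simp only [add_comm]

theorem stmt18 {K : Type*} [Field K] (n : ℕ) (hn : 2 ≤ n) (a b : ℕ → K) :
    (Matrix.of fun i j : Fin n =>
        if (i : ℕ) = 0 then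
          (if (j : ℕ) = n - 1 then -a n - b n else -a ((j : ℕ) + 1))
        else if (i : ℕ) = (j : ℕ) + 1 then (1 : K)
        else if (j : ℕ) = n - 1 then -b (n - (i : ℕ))
        else 0).det =
      (-1) ^ n * (a n + b n + ∑ k ∈ Finset.Icc 1 (n - 1), a k * b (n - k)) := by
  obtain ⟨m, rfl⟩ : ∃ m, n = m + 1 := ⟨n - 1, by omega⟩
  have hj (j : Fin m) : (j : ℕ) ≠ m := j.isLt.ne
  have hj' (j : Fin m) : m + 1 - ((j : ℕ) + 1) = m - j := by omega
  rw [det_succ_of_submatrix_succ_castSucc_eq_one, Nat.add_sub_cancel, sum_Icc_one_eq_sum_fin]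
  · simp only [of_apply, Fin.val_zero, Fin.val_last, Fin.val_castSucc, Fin.val_succ, if_true,
      Nat.add_right_cancel_iff, hj, if_false, Nat.succ_ne_zero, hj', neg_mul_neg]
    ring
  · ext i j
    simp only [submatrix_apply, of_apply, Fin.val_succ, Fin.val_castSucc, Nat.succ_ne_zero,
      if_false, Nat.add_sub_cancel, hj, one_apply, Fin.ext_iff, Nat.succ_inj]
end
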